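/- Let M be a metric space, O ∈ M a basepoint, and suppose for each n there is a map fₙ : M → X into a Banach space with Lip(fₙ) ≤ 1, fₙ(O) = 0, and such that d(x,y) ≥ N(n) implies ‖fₙ(x) − fₙ(y)‖ > n³ for some N(n). Then f : M → (Σₙ ⊕ X)₁ given by f(x) = (fₙ(x)/(Kn²))ₙ with K = Σ 1/n² is a coarse embedding of M into the ℓ₁-sum of copies of X. -/

import Mathlib

/-!
The weights `1/(Kn²)` are summable, so a basepoint-vanishing family of `1`-Lipschitz coordinates
lands in `ℓ₁` and the resulting map is Lipschitz. For the lower bound, `‖·‖₁` dominates each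
coordinate, and the `n`-th one exceeds `n³/(Kn²) = n/K` once `d(x,y) ≥ N(n)`; so `‖f x - f y‖`
tends to infinity uniformly as `d(x,y) → ∞`, and any such quantity is bounded below by a function
of `d(x,y)` tending to infinity.
-/

open Filter

theorem exists_tendsto_atTop_le_of_tendsto_comap {α : Type*} {d D : α → ℝ} (hD₀ : ∀ a, 0 ≤ D a)
    (hD : Tendsto D (comap d atTop) atTop) :
    ∃ ρ : ℝ → ℝ, Tendsto ρ atTop atTop ∧ ∀ a, ρ (d a) ≤ D a := by
  have hthreshold : ∀ n : ℕ, ∃ R : ℝ, ∀ a, R ≤ d a → (n : ℝ) ≤ D a := fun n => by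
    simpa using (atTop_basis.comap d).tendsto_iff atTop_basis |>.1 hD n
  choose R hR using hthreshold
  classical
  -- `ρ t` is the largest `n ≤ ⌊t⌋` whose threshold has been passed; the cap keeps it finite.
  refine ⟨fun t => (Nat.findGreatest (fun n => R n ≤ t) ⌊t⌋₊ : ℝ), ?_, fun a => ?_⟩
  · refine tendsto_natCast_atTop_atTop.comp (tendsto_atTop.2 fun m => ?_)
    filter_upwards [eventually_ge_atTop (max (R m) m)] with t ht
    exact Nat.le_findGreatest (Nat.le_floor ((le_max_right _ _).trans ht))
      ((le_max_left _ _).trans ht)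
  · by_cases h0 : Nat.findGreatest (fun n => R n ≤ d a) ⌊d a⌋₊ = 0
    · simpa [h0] using hD₀ a
    · exact hR _ a (Nat.findGreatest_of_ne_zero rfl h0)

section WeightedEllOne

variable {M X : Type*} [NormedAddCommGroup X] [NormedSpace ℝ X] {c : ℕ → ℝ} {g : ℕ → M → X}
  {F : M → lp (fun _ : ℕ => X) 1}

theorem norm_apply_sub_eq (hF : ∀ x n, F x n = c n • g n x) (hc₀ : ∀ n, 0 ≤ c n)
    (x y : M) (n : ℕ) : ‖(F x - F y) n‖ = c n * ‖g n x - g n y‖ := by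
  rw [lp.coeFn_sub, Pi.sub_apply, hF, hF, ← smul_sub, norm_smul, Real.norm_of_nonneg (hc₀ n)]

variable [PseudoMetricSpace M]

theorem memℓp_one_smul_of_lipschitzWith (hc : Summable c) (hc₀ : ∀ n, 0 ≤ c n)
    (hg : ∀ n, LipschitzWith 1 (g n)) {O : M} (hO : ∀ n, g n O = 0) (x : M) :
    Memℓp (fun n => c n • g n x) 1 := by
  refine memℓp_gen ?_
  simp only [ENNReal.toReal_one, Real.rpow_one]
  refine (hc.mul_right (dist x O)).of_nonneg_of_le (fun n => norm_nonneg _) fun n => ?_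
  rw [norm_smul, Real.norm_of_nonneg (hc₀ n), ← sub_zero (g n x), ← hO n, ← dist_eq_norm]
  exact mul_le_mul_of_nonneg_left ((hg n).dist_le_mul x O |>.trans_eq (one_mul _)) (hc₀ n)

theorem norm_sub_le_tsum_mul_dist (hF : ∀ x n, F x n = c n • g n x) (hc : Summable c)
    (hc₀ : ∀ n, 0 ≤ c n) (hg : ∀ n, LipschitzWith 1 (g n)) (x y : M) :
    ‖F x - F y‖ ≤ (∑' n, c n) * dist x y := by
  have hcoord : ∀ n, ‖(F x - F y) n‖ ≤ c n * dist x y := fun n => by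
    rw [norm_apply_sub_eq hF hc₀, ← dist_eq_norm]
    exact mul_le_mul_of_nonneg_left ((hg n).dist_le_mul x y |>.trans_eq (one_mul _)) (hc₀ n)
  refine lp.norm_le_of_tsum_le (by norm_num) (mul_nonneg (tsum_nonneg hc₀) dist_nonneg) ?_
  simp only [ENNReal.toReal_one, Real.rpow_one, ← tsum_mul_right]
  have hdom := hc.mul_right (dist x y)
  exact (hdom.of_nonneg_of_le (fun n => norm_nonneg _) hcoord).tsum_le_tsum hcoord hdom

theorem tendsto_norm_sub_comap_dist_atTop (hF : ∀ x n, F x n = c n • g n x)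
    (hc₀ : ∀ n, 0 ≤ c n) {a : ℕ → ℝ}
    (hsep : ∀ n, ∃ R : ℝ, ∀ x y, R ≤ dist x y → a n < ‖g n x - g n y‖)
    (ha : Tendsto (fun n => c n * a n) atTop atTop) :
    Tendsto (fun p : M × M => ‖F p.1 - F p.2‖) (comap (fun p => dist p.1 p.2) atTop) atTop := by
  refine (atTop_basis.comap _).tendsto_iff atTop_basis |>.2 fun C _ => ?_
  obtain ⟨n, hn⟩ := (tendsto_atTop.1 ha C).exists
  obtain ⟨R, hR⟩ := hsep n
  refine ⟨R, trivial, fun p hp => hn.trans ?_⟩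
  calc c n * a n ≤ c n * ‖g n p.1 - g n p.2‖ :=
        mul_le_mul_of_nonneg_left (hR p.1 p.2 hp).le (hc₀ n)
    _ = ‖(F p.1 - F p.2) n‖ := (norm_apply_sub_eq hF hc₀ _ _ n).symm
    _ ≤ ‖F p.1 - F p.2‖ := lp.norm_apply_le_norm one_ne_zero _ n

end WeightedEllOne

theorem coarseEmbedding_weighted_ell1_sum {M X : Type*} [MetricSpace M]
    [NormedAddCommGroup X] [NormedSpace ℝ X]
    (O : M) (f : ℕ → M → X)
    (hLip : ∀ n : ℕ, 1 ≤ n → LipschitzWith 1 (f n))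
    (hO : ∀ n : ℕ, 1 ≤ n → f n O = 0)
    (hsep : ∀ n : ℕ, 1 ≤ n → ∃ N : ℝ, ∀ x y : M,
      N ≤ dist x y → ((n : ℝ)) ^ 3 < ‖f n x - f n y‖)
    (K : ℝ) (hK : K = ∑' n : ℕ, 1 / ((n : ℝ) + 1) ^ 2) :
    ∃ F : M → lp (fun _ : ℕ => X) 1,
      (∀ (x : M) (n : ℕ), (F x : ∀ _ : ℕ, X) n
          = (1 / (K * ((n : ℝ) + 1) ^ 2)) • f (n + 1) x) ∧
      ∃ ρ₁ ρ₂ : ℝ → ℝ,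
        (∀ x y : M, ρ₁ (dist x y) ≤ ‖F x - F y‖ ∧ ‖F x - F y‖ ≤ ρ₂ (dist x y)) ∧
        Filter.Tendsto ρ₁ Filter.atTop Filter.atTop := by
  have hsum : Summable fun n : ℕ => 1 / ((n : ℝ) + 1) ^ 2 := by
    exact_mod_cast (summable_nat_add_iff 1).2 (Real.summable_one_div_nat_pow.2 one_lt_two)
  have hK₀ : 0 < K := hK ▸ hsum.tsum_pos (fun n => by positivity) 0 (by positivity)
  set c : ℕ → ℝ := fun n => 1 / (K * ((n : ℝ) + 1) ^ 2)
  have hc₀ : ∀ n, 0 ≤ c n := fun n => by positivity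
  have hc : Summable c := (hsum.mul_left (1 / K)).congr fun n => one_div_mul_one_div _ _
  have hg (n : ℕ) := hLip (n + 1) n.succ_pos
  have hmem := memℓp_one_smul_of_lipschitzWith hc hc₀ hg fun n => hO (n + 1) n.succ_pos
  let F : M → lp (fun _ : ℕ => X) 1 := fun x => ⟨_, hmem x⟩
  have hF : ∀ x n, F x n = c n • f (n + 1) x := fun _ _ => rfl
  have hgrowth : Tendsto (fun n : ℕ => c n * ((n : ℝ) + 1) ^ 3) atTop atTop := by
    have hlin := (tendsto_natCast_atTop_atTop (R := ℝ)).atTop_add (tendsto_const_nhds (x := 1))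
    refine (hlin.atTop_div_const hK₀).congr fun n => ?_
    simp only [c]
    field_simp
  have hsep' (n : ℕ) := hsep (n + 1) n.succ_pos
  push_cast at hsep'
  obtain ⟨ρ₁, hρ₁, hρ₁_le⟩ := exists_tendsto_atTop_le_of_tendsto_comap (fun _ => norm_nonneg _)
    (tendsto_norm_sub_comap_dist_atTop hF hc₀ hsep' hgrowth)
  exact ⟨F, hF, ρ₁, fun t => (∑' n, c n) * t, fun x y => ⟨hρ₁_le (x, y),
    norm_sub_le_tsum_mul_dist hF hc hc₀ hg x y⟩, hρ₁⟩
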